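/- arXiv:2202.06452 — 2 statements merged into one kernel-verified Lean document; each statement's English description precedes it below -/
import Mathlib

section
/- A set of b ≥ 3 arcs on the circle in which each arc intersects at most its two cyclically adjacent arcs produces at most 2b nonempty positivity sets for p = 1; any family of b arcs on the circle produces at most 2b nonempty positivity sets, since a point of the circle can lie in a set of arcs only if their indices form a set whose arcs pairwise intersect, and any family of arcs covering a common point yields an 'interval' of overlap structure bounding distinct intersection patterns by 2b. -/
/-!
Represent a point of `AddCircle p` by `u ∈ [0, p)` and `u` by the cut `UpperSet.Ici u` in the
linearly ordered set of upper sets of `ℝ`: cuts split each point into "at `u`" and "just after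
`u`", which separates closed from open ends of arcs. Cut at a point outside it, a proper arc
lifts to an interval of `ℝ`, so the arc or its complement consists of the points whose cut lies
in a half-open interval `[a, b)` of cuts. Up to complementing fixed coordinates, positivity sets
are therefore patterns of `b` half-open intervals in a linear order; a pattern only changes at
the at most `2b` endpoints and is empty both before the first and after the last one, so there
are at most `2b`.
-/

open Real Set

theorem Set.OrdConnected.exists_upperSet_eq_diff {α : Type*} [Preorder α] {s : Set α}
    (hs : s.OrdConnected) : ∃ a b : UpperSet α, s = (a : Set α) \ b :=
  ⟨upperClosure s, (lowerClosure s).compl, by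
    rw [LowerSet.coe_compl, sdiff_compl, hs.upperClosure_inter_lowerClosure]⟩

theorem UpperSet.Ici_mem_Ico_iff {α : Type*} [LinearOrder α] {a b : UpperSet α} {u : α} :
    UpperSet.Ici u ∈ Ico a b ↔ u ∈ (a : Set α) \ b := by
  simp only [mem_Ico, ← not_le, UpperSet.le_Ici, mem_sdiff, SetLike.mem_coe]

theorem ncard_range_setOf_mem_Ico_le {T ι : Type*} [LinearOrder T] [Fintype ι] [Nonempty ι]
    (a b : ι → T) :
    (range fun t => {i | t ∈ Ico (a i) (b i)}).ncard ≤ 2 * Fintype.card ι := by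
  classical
  set pattern : T → Set ι := fun t => {i | t ∈ Ico (a i) (b i)}
  set E : Finset T := Finset.univ.image a ∪ Finset.univ.image b
  have haE : ∀ i, a i ∈ E := fun i =>
    Finset.mem_union_left _ (Finset.mem_image_of_mem a (Finset.mem_univ i))
  have hbE : ∀ i, b i ∈ E := fun i =>
    Finset.mem_union_right _ (Finset.mem_image_of_mem b (Finset.mem_univ i))
  have hE : E.Nonempty := ⟨_, haE (Classical.arbitrary ι)⟩
  -- `t` has the pattern of the last endpoint `≤ t`; if there is none, both `t` and the largest
  -- endpoint have the empty pattern
  have hcell : ∀ t, ∃ e ∈ E, pattern t = pattern e := by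
    intro t
    by_cases h : (E.filter (· ≤ t)).Nonempty
    · obtain ⟨hmE, hmt⟩ := Finset.mem_filter.1 (Finset.max'_mem _ h)
      refine ⟨_, hmE, ?_⟩
      have hm : ∀ e ∈ E, e ≤ t ↔ e ≤ (E.filter (· ≤ t)).max' h := fun e he =>
        ⟨fun het => Finset.le_max' _ _ (Finset.mem_filter.2 ⟨he, het⟩),
          fun hem => hem.trans hmt⟩
      ext i
      simp only [pattern, mem_ofPred_eq, mem_Ico, ← not_le, hm _ (haE i), hm _ (hbE i)]
    · refine ⟨E.max' hE, E.max'_mem hE, ?_⟩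
      simp only [Finset.not_nonempty_iff_eq_empty, Finset.filter_eq_empty_iff, not_le] at h
      ext i
      simp only [pattern, mem_ofPred_eq, mem_Ico, not_le.2 (h (haE i)), false_and, false_iff,
        not_and, not_lt]
      exact fun _ => E.le_max' _ (hbE i)
  calc (range pattern).ncard ≤ (pattern '' E).ncard := by
        refine ncard_le_ncard ?_ (toFinite _)
        rintro _ ⟨t, rfl⟩
        obtain ⟨e, he, het⟩ := hcell t
        exact ⟨e, he, het.symm⟩
    _ ≤ E.card := (ncard_image_le (toFinite _)).trans (ncard_coe_finset E).le
    _ ≤ 2 * Fintype.card ι := by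
        refine (Finset.card_union_le _ _).trans ?_
        have := Finset.card_image_le (s := Finset.univ) (f := a)
        have := Finset.card_image_le (s := Finset.univ) (f := b)
        simp only [Finset.card_univ] at *
        omega

namespace AddCircle

variable {p : ℝ} [Fact (0 < p)] {Φ : Set (AddCircle p)}

theorem equivIco_zero_mem (x : AddCircle p) : (equivIco p 0 x : ℝ) ∈ Ico 0 p := by
  simpa using (equivIco p 0 x).2

theorem ordConnected_Ioo_inter_coe_preimage (hΦ : IsPreconnected Φ) {a : ℝ}
    (ha : (a : AddCircle p) ∉ Φ) : (Ioo a (a + p) ∩ (↑) ⁻¹' Φ).OrdConnected := by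
  set e := openPartialHomeomorphCoe p a
  have hΦe : Φ ⊆ e.target := fun x hx (h : x = a) => ha (h ▸ hx)
  change (e.source ∩ e ⁻¹' Φ).OrdConnected
  rw [← e.symm_image_eq_source_inter_preimage hΦe]
  exact (hΦ.image _ (e.continuousOn_symm.mono hΦe)).ordConnected

theorem exists_upperSet_mem_iff_of_zero_notMem (hΦ : IsPreconnected Φ) (h0 : 0 ∉ Φ) :
    ∃ a b : UpperSet ℝ, ∀ x, x ∈ Φ ↔ (equivIco p 0 x : ℝ) ∈ (a : Set ℝ) \ b := by
  obtain ⟨a, b, hab⟩ :=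
    (ordConnected_Ioo_inter_coe_preimage (a := 0) hΦ (by simpa using h0)).exists_upperSet_eq_diff
  refine ⟨a, b, fun x => ?_⟩
  rw [← hab]
  conv_lhs => rw [← coe_equivIco (a := 0) (y := x)]
  obtain ⟨hx0, hxp⟩ := equivIco_zero_mem x
  refine ⟨fun hxΦ => ⟨⟨hx0.lt_of_ne ?_, by simpa using hxp⟩, hxΦ⟩, And.right⟩
  rintro h
  rw [← h] at hxΦ
  exact h0 (by simpa using hxΦ)

/-- An arc through `0` is cut at a point `r` outside it; its lift to `(r, r + p)` then
contains `p`, and the arc wraps around `0`. -/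
theorem exists_upperSet_notMem_iff_of_zero_mem (hΦ : IsPreconnected Φ) (hne : Φ ≠ univ)
    (h0 : 0 ∈ Φ) :
    ∃ a b : UpperSet ℝ, ∀ x, x ∉ Φ ↔ (equivIco p 0 x : ℝ) ∈ (a : Set ℝ) \ b := by
  obtain ⟨z, hz⟩ := ne_univ_iff_exists_notMem Φ |>.1 hne
  set r := (equivIco p 0 z : ℝ)
  have hr : r ∈ Ico 0 p := equivIco_zero_mem z
  have hrz : (r : AddCircle p) = z := coe_equivIco
  have hr0 : r ≠ 0 := by
    rintro h
    rw [h] at hrz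
    exact hz (hrz ▸ h0)
  set I := Ioo r (r + p) ∩ (↑) ⁻¹' Φ
  have hI : I.OrdConnected := ordConnected_Ioo_inter_coe_preimage hΦ (hrz ▸ hz)
  have hpI : p ∈ I := ⟨⟨hr.2, by linarith [lt_of_le_of_ne hr.1 (Ne.symm hr0)]⟩,
    by rwa [mem_preimage, coe_period]⟩
  have hmem : ∀ u ∈ Ico 0 p,
      (u : AddCircle p) ∈ Φ ↔ u ∈ upperClosure I ∨ u + p ∈ lowerClosure I := by
    intro u hu
    constructor
    · intro huΦ
      rcases lt_trichotomy u r with h | h | h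
      · exact Or.inr <| subset_lowerClosure
          ⟨⟨by linarith [hu.1, hr.2], by linarith⟩, by simpa using huΦ⟩
      · rw [h, hrz] at huΦ
        exact absurd huΦ hz
      · exact Or.inl <| subset_upperClosure ⟨⟨h, by linarith [hu.2, hr.1]⟩, huΦ⟩
    · rintro (⟨t, ht, htu⟩ | ⟨t, ht, htu⟩)
      · exact (hI.out ht hpI ⟨htu, hu.2.le⟩).2
      · simpa using (hI.out hpI ht ⟨by linarith [hu.1], htu⟩).2
  refine ⟨(lowerClosure I).compl.map (OrderIso.addRight p).symm, upperClosure I, fun x => ?_⟩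
  conv_lhs => rw [← coe_equivIco (a := 0) (y := x)]
  rw [hmem _ (equivIco_zero_mem x)]
  simp only [mem_sdiff, SetLike.mem_coe, UpperSet.mem_map, OrderIso.symm_symm,
    OrderIso.addRight_apply, LowerSet.mem_compl_iff]
  tauto

theorem exists_upperSet_mem_iff_of_isPreconnected (hΦ : IsPreconnected Φ) (hne : Φ ≠ univ) :
    ∃ (a b : UpperSet ℝ) (c : Prop),
      ∀ x, x ∈ Φ ↔ ((equivIco p 0 x : ℝ) ∈ (a : Set ℝ) \ b ↔ c) := by
  by_cases h0 : (0 : AddCircle p) ∈ Φ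
  · obtain ⟨a, b, hab⟩ := exists_upperSet_notMem_iff_of_zero_mem hΦ hne h0
    exact ⟨a, b, False, fun x => by rw [iff_false, ← hab, not_not]⟩
  · obtain ⟨a, b, hab⟩ := exists_upperSet_mem_iff_of_zero_notMem hΦ h0
    exact ⟨a, b, True, fun x => by rw [iff_true, hab]⟩

end AddCircle

/-- for any family of `b` arcs (connected subsets of the circle
`ℝ/2πℤ`), none of which is the whole circle, the number of distinct nonempty
positivity sets `A(x) = {i : x ∈ Φ_i}` is at most `2b`. -/
theorem arcs_positivity_sets_le {b : ℕ}
    (Φ : Fin b → Set (AddCircle (2 * π)))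
    (hconn : ∀ i, IsPreconnected (Φ i))
    (hproper : ∀ i, Φ i ≠ Set.univ) :
    Set.ncard {A : Set (Fin b) | A.Nonempty ∧ ∃ x : AddCircle (2 * π), A = {i | x ∈ Φ i}}
      ≤ 2 * b := by
  rcases isEmpty_or_nonempty (Fin b) with hb | hb
  · simp [Set.eq_empty_of_isEmpty]
  have : Fact (0 < 2 * π) := ⟨two_pi_pos⟩
  choose s t c hΦ using fun i =>
    AddCircle.exists_upperSet_mem_iff_of_isPreconnected (hconn i) (hproper i)
  set pattern : UpperSet ℝ → Set (Fin b) := fun τ => {i | τ ∈ Ico (s i) (t i)}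
  set toPositivitySet : Set (Fin b) → Set (Fin b) := fun S => {i | i ∈ S ↔ c i}
  have hA : ∀ x, {i | x ∈ Φ i} =
      toPositivitySet (pattern (UpperSet.Ici (AddCircle.equivIco (2 * π) 0 x))) := by
    intro x
    ext i
    simp only [toPositivitySet, pattern, mem_ofPred_eq, UpperSet.Ici_mem_Ico_iff, hΦ i x]
  calc _ ≤ (toPositivitySet '' range pattern).ncard := by
        refine ncard_le_ncard ?_ (toFinite _)
        rintro _ ⟨-, x, rfl⟩
        exact hA x ▸ mem_image_of_mem toPositivitySet (mem_range_self _)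
    _ ≤ (range pattern).ncard := ncard_image_le (toFinite _)
    _ ≤ 2 * b := (ncard_range_setOf_mem_Ico_le s t).trans_eq (by rw [Fintype.card_fin])
end

section
/- In a Tulip design with b ≥ 4 beams, the component beams are exactly the sets ω_i = [y_{i⊖1}, x_{i⊕1}) and ω_{i,i⊕1} = [x_{i⊕1}, y_i) when Φ_i = [x_i, y_i) are arcs satisfying x_i ≤ x_{i⊕1} ≤ y_i ≤ y_{i⊕1} (cyclically), and these 2b intervals partition the circle. -/
open Real

/-!
Unroll the circle from `x_1`: the endpoints `x_1 ≤ y_0 ≤ x_2 ≤ y_1 ≤ ⋯ ≤ x_{b+1} = x_1 + 2π`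
form one monotone sequence, so the `2b` component beams are the consecutive intervals of a
subdivision of a fundamental domain `[x_1, x_1 + 2π)` of the covering `ℝ → ℝ/2πℤ`, which is
injective there. Likewise `Φ_i`, `Φ_{i⊕1}` and `Φ_{i⊕2}` all lie in `[x_i, x_i + 2π)` once
`b ≥ 4`, so their intersections and differences on the circle are those of real intervals.
-/

open Set

namespace AddCircle

variable {𝕜 : Type*} [AddCommGroup 𝕜] [LinearOrder 𝕜] [IsOrderedAddMonoid 𝕜] [Archimedean 𝕜]
  {p : 𝕜} [Fact (0 < p)]

theorem injOn_coe_Ico (a : 𝕜) : (Ico a (a + p)).InjOn ((↑) : 𝕜 → AddCircle p) :=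
  fun _ hx _ hy h => (coe_eq_coe_iff_of_mem_Ico hx hy).mp h

end AddCircle

theorem Set.InjOn.image_sdiff_of_subset {α β : Type*} {f : α → β} {s t u : Set α}
    (hf : u.InjOn f) (hs : s ⊆ u) (ht : t ⊆ u) : f '' (s \ t) = f '' s \ f '' t := by
  rw [(hf.mono hs).image_sdiff, hf.image_inter hs ht, sdiff_self_inter]

section Intervals

variable {α : Type*} [LinearOrder α]

theorem Set.Ico_inter_Ico_of_le {a₁ a₂ b₁ b₂ : α} (ha : a₁ ≤ a₂) (hb : b₁ ≤ b₂) :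
    Ico a₁ b₁ ∩ Ico a₂ b₂ = Ico a₂ b₁ := by
  rw [Ico_inter_Ico, max_eq_right ha, min_eq_left hb]

theorem Set.Ico_diff_Ico_union_Ico {a₀ a₁ a₂ b₀ b₁ b₂ : α} (h₀ : a₀ ≤ a₁) (h₁ : a₁ ≤ b₀)
    (h₂ : a₂ ≤ b₁) (h₃ : b₁ ≤ b₂) :
    Ico a₁ b₁ \ (Ico a₀ b₀ ∪ Ico a₂ b₂) = Ico b₀ a₂ := by
  ext t
  simp only [mem_sdiff, mem_union, mem_Ico, not_or, not_and, not_lt]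
  constructor
  · rintro ⟨⟨ht₁, ht₂⟩, hb₀, ha₂⟩
    exact ⟨hb₀ (h₀.trans ht₁), lt_of_not_ge fun h => (ha₂ h).not_gt (ht₂.trans_le h₃)⟩
  · rintro ⟨ht₁, ht₂⟩
    exact ⟨⟨h₁.trans ht₁, ht₂.trans_le h₂⟩, fun _ => ht₁, fun h => absurd ht₂ h.not_gt⟩

end Intervals

theorem Set.biUnion_range_two_mul {β : Type*} (s : ℕ → Set β) (n : ℕ) :
    ⋃ m ∈ Finset.range (2 * n), s m =
      (⋃ i ∈ Finset.range n, s (2 * i)) ∪ ⋃ i ∈ Finset.range n, s (2 * i + 1) := by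
  ext x
  simp only [mem_union, mem_iUnion, Finset.mem_range, exists_prop]
  constructor
  · rintro ⟨m, hm, hx⟩
    obtain ⟨k, rfl | rfl⟩ := Nat.even_or_odd' m
    · exact Or.inl ⟨k, by omega, hx⟩
    · exact Or.inr ⟨k, by omega, hx⟩
  · rintro (⟨k, hk, hx⟩ | ⟨k, hk, hx⟩)
    · exact ⟨2 * k, by omega, hx⟩
    · exact ⟨2 * k + 1, by omega, hx⟩

theorem Monotone.disjoint_image_Ico_succ {α β : Type*} [LinearOrder α] {z : ℕ → α}
    (hz : Monotone z) {f : α → β} {N : ℕ} (hf : (Ico (z 0) (z N)).InjOn f) {m n : ℕ}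
    (hm : m < N) (hn : n < N) (hmn : m ≠ n) :
    Disjoint (f '' Ico (z m) (z (m + 1))) (f '' Ico (z n) (z (n + 1))) := by
  have hsub : ∀ k < N, Ico (z k) (z (k + 1)) ⊆ Ico (z 0) (z N) := fun k hk =>
    Ico_subset_Ico (hz k.zero_le) (hz hk)
  exact (hz.pairwise_disjoint_on_Ico_succ hmn).image hf (hsub m hm) (hsub n hn)

section Interleave

variable {α : Type*}

def interleave (f g : ℕ → α) (m : ℕ) : α :=
  if Even m then f (m / 2) else g (m / 2)

@[simp]
theorem interleave_two_mul (f g : ℕ → α) (i : ℕ) : interleave f g (2 * i) = f i := by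
  simp [interleave]

@[simp]
theorem interleave_two_mul_add_one (f g : ℕ → α) (i : ℕ) :
    interleave f g (2 * i + 1) = g i := by
  simp [interleave, show (2 * i + 1) / 2 = i by omega]

theorem monotone_interleave [Preorder α] {f g : ℕ → α} (hfg : ∀ i, f i ≤ g i)
    (hgf : ∀ i, g i ≤ f (i + 1)) : Monotone (interleave f g) := by
  refine monotone_nat_of_le_succ fun m => ?_
  obtain ⟨k, rfl | rfl⟩ := Nat.even_or_odd' m
  · simpa using hfg k
  · simpa [show 2 * k + 1 + 1 = 2 * (k + 1) by ring] using hgf k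

end Interleave

theorem tulip_component_beams_partition_general {b : ℕ} (hb : 4 ≤ b) (X Y : ℕ → ℝ)
    (hXper : ∀ i, X (i + b) = X i + 2 * π)
    (hXmono : ∀ i, X i ≤ X (i + 1))
    (hover : ∀ i, X (i + 1) ≤ Y i)
    (hnext : ∀ i, Y i ≤ X (i + 2)) :
    (∀ i, ((fun t : ℝ => (t : AddCircle (2 * π))) '' Set.Ico (X i) (Y i)) ∩
            ((fun t : ℝ => (t : AddCircle (2 * π))) '' Set.Ico (X (i + 1)) (Y (i + 1)))
          = (fun t : ℝ => (t : AddCircle (2 * π))) '' Set.Ico (X (i + 1)) (Y i)) ∧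
    (∀ i, ((fun t : ℝ => (t : AddCircle (2 * π))) '' Set.Ico (X (i + 1)) (Y (i + 1))) \
            (((fun t : ℝ => (t : AddCircle (2 * π))) '' Set.Ico (X i) (Y i)) ∪
              ((fun t : ℝ => (t : AddCircle (2 * π))) '' Set.Ico (X (i + 2)) (Y (i + 2))))
          = (fun t : ℝ => (t : AddCircle (2 * π))) '' Set.Ico (Y i) (X (i + 2))) ∧
    ((⋃ i ∈ Finset.range b,
        (fun t : ℝ => (t : AddCircle (2 * π))) '' Set.Ico (X (i + 1)) (Y i)) ∪
      (⋃ i ∈ Finset.range b,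
        (fun t : ℝ => (t : AddCircle (2 * π))) '' Set.Ico (Y i) (X (i + 2)))
        = Set.univ) ∧
    (∀ i ∈ Finset.range b, ∀ j ∈ Finset.range b, i ≠ j →
        Disjoint ((fun t : ℝ => (t : AddCircle (2 * π))) '' Set.Ico (X (i + 1)) (Y i))
                 ((fun t : ℝ => (t : AddCircle (2 * π))) '' Set.Ico (X (j + 1)) (Y j)) ∧
        Disjoint ((fun t : ℝ => (t : AddCircle (2 * π))) '' Set.Ico (Y i) (X (i + 2)))
                 ((fun t : ℝ => (t : AddCircle (2 * π))) '' Set.Ico (Y j) (X (j + 2)))) ∧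
    (∀ i ∈ Finset.range b, ∀ j ∈ Finset.range b,
        Disjoint ((fun t : ℝ => (t : AddCircle (2 * π))) '' Set.Ico (Y i) (X (i + 2)))
                 ((fun t : ℝ => (t : AddCircle (2 * π))) '' Set.Ico (X (j + 1)) (Y j))) := by
  have : Fact (0 < 2 * π) := ⟨by positivity⟩
  have hXm : Monotone X := monotone_nat_of_le_succ hXmono
  have hΦ : ∀ i j, i ≤ j → j + 2 ≤ i + b → Ico (X j) (Y j) ⊆ Ico (X i) (X i + 2 * π) :=
    fun i j hij hji => Ico_subset_Ico (hXm hij) (hXper i ▸ (hnext j).trans (hXm hji))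
  set z := interleave (fun i => X (i + 1)) Y
  have hz : Monotone z := monotone_interleave hover hnext
  have hω : ∀ i, Ico (X (i + 1)) (Y i) = Ico (z (2 * i)) (z (2 * i + 1)) := by simp [z]
  have hω' : ∀ i, Ico (Y i) (X (i + 2)) = Ico (z (2 * i + 1)) (z (2 * i + 1 + 1)) := by
    simp [z, show ∀ i, 2 * i + 1 + 1 = 2 * (i + 1) by omega]
  have hwindow : Ico (z 0) (z (2 * b)) = Ico (X 1) (X 1 + 2 * π) := by
    simp [z, interleave, ← hXper, add_comm]
  have hinj : (Ico (z 0) (z (2 * b))).InjOn ((↑) : ℝ → AddCircle (2 * π)) :=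
    hwindow ▸ AddCircle.injOn_coe_Ico (X 1)
  refine ⟨fun i => ?_, fun i => ?_, ?_, fun i hi j hj hij => ?_, fun i hi j hj => ?_⟩
  · rw [← (AddCircle.injOn_coe_Ico (X i)).image_inter (hΦ i i le_rfl (by omega))
      (hΦ i (i + 1) (by omega) (by omega)),
      Ico_inter_Ico_of_le (hXmono i) ((hnext i).trans (hover (i + 1)))]
  · rw [← image_union, ← (AddCircle.injOn_coe_Ico (X i)).image_sdiff_of_subset
      (hΦ i (i + 1) (by omega) (by omega))
      (union_subset (hΦ i i le_rfl (by omega)) (hΦ i (i + 2) (by omega) (by omega))),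
      Ico_diff_Ico_union_Ico (hXmono i) (hover i) (hover (i + 1))
        ((hnext (i + 1)).trans (hover (i + 2)))]
  · refine eq_univ_of_univ_subset ?_
    rw [← AddCircle.coe_image_Ico_eq (2 * π) (X 1), ← hwindow]
    refine (image_mono (Ico_subset_biUnion_Ico (2 * b) z)).trans ?_
    simp only [biUnion_range_two_mul, image_union, image_iUnion₂, hω, hω']
    rfl
  · rw [Finset.mem_range] at hi hj
    rw [hω, hω, hω', hω']
    exact ⟨hz.disjoint_image_Ico_succ hinj (by omega) (by omega) (by omega),
      hz.disjoint_image_Ico_succ hinj (by omega) (by omega) (by omega)⟩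
  · rw [Finset.mem_range] at hi hj
    rw [hω, hω']
    exact hz.disjoint_image_Ico_succ hinj (by omega) (by omega) (by omega)

/-- in a Tulip design with `b ≥ 4` arcs `Φ_i = [x_i, y_i)` on the
circle `ℝ/2πℤ` (given via `2π`-periodic lifts `X Y : ℕ → ℝ` with the cyclic
ordering `x_i ≤ x_{i+1} ≤ y_i ≤ x_{i+2}`, each beam overlapping only the next),
the component beams are exactly `ω_{i,i⊕1} = Φ_i ∩ Φ_{i⊕1} = [x_{i⊕1}, y_i)`
and `ω_{i⊕1} = Φ_{i⊕1} \ (Φ_i ∪ Φ_{i⊕2}) = [y_i, x_{i⊕2})`, and these `2b`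
intervals partition the circle. -/
theorem tulip_component_beams_partition {b : ℕ} (hb : 4 ≤ b) (X Y : ℕ → ℝ)
    (hXper : ∀ i, X (i + b) = X i + 2 * π)
    (hYper : ∀ i, Y (i + b) = Y i + 2 * π)
    (hXmono : ∀ i, X i ≤ X (i + 1))
    (hover : ∀ i, X (i + 1) ≤ Y i)
    (hnext : ∀ i, Y i ≤ X (i + 2)) :
    (∀ i, ((fun t : ℝ => (t : AddCircle (2 * π))) '' Set.Ico (X i) (Y i)) ∩
            ((fun t : ℝ => (t : AddCircle (2 * π))) '' Set.Ico (X (i + 1)) (Y (i + 1)))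
          = (fun t : ℝ => (t : AddCircle (2 * π))) '' Set.Ico (X (i + 1)) (Y i)) ∧
    (∀ i, ((fun t : ℝ => (t : AddCircle (2 * π))) '' Set.Ico (X (i + 1)) (Y (i + 1))) \
            (((fun t : ℝ => (t : AddCircle (2 * π))) '' Set.Ico (X i) (Y i)) ∪
              ((fun t : ℝ => (t : AddCircle (2 * π))) '' Set.Ico (X (i + 2)) (Y (i + 2))))
          = (fun t : ℝ => (t : AddCircle (2 * π))) '' Set.Ico (Y i) (X (i + 2))) ∧
    ((⋃ i ∈ Finset.range b,
        (fun t : ℝ => (t : AddCircle (2 * π))) '' Set.Ico (X (i + 1)) (Y i)) ∪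
      (⋃ i ∈ Finset.range b,
        (fun t : ℝ => (t : AddCircle (2 * π))) '' Set.Ico (Y i) (X (i + 2)))
        = Set.univ) ∧
    (∀ i ∈ Finset.range b, ∀ j ∈ Finset.range b, i ≠ j →
        Disjoint ((fun t : ℝ => (t : AddCircle (2 * π))) '' Set.Ico (X (i + 1)) (Y i))
                 ((fun t : ℝ => (t : AddCircle (2 * π))) '' Set.Ico (X (j + 1)) (Y j)) ∧
        Disjoint ((fun t : ℝ => (t : AddCircle (2 * π))) '' Set.Ico (Y i) (X (i + 2)))
                 ((fun t : ℝ => (t : AddCircle (2 * π))) '' Set.Ico (Y j) (X (j + 2)))) ∧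
    (∀ i ∈ Finset.range b, ∀ j ∈ Finset.range b,
        Disjoint ((fun t : ℝ => (t : AddCircle (2 * π))) '' Set.Ico (Y i) (X (i + 2)))
                 ((fun t : ℝ => (t : AddCircle (2 * π))) '' Set.Ico (X (j + 1)) (Y j))) :=
  tulip_component_beams_partition_general hb X Y hXper hXmono hover hnext
end
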